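/- The W state |001⟩ + |010⟩ + |100⟩ and the GHZ state |000⟩ + |111⟩ are not SLOCC equivalent: there exist no invertible 2×2 complex matrices M₁, M₂, M₃ with (M₁ ⊗ M₂ ⊗ M₃)(|000⟩ + |111⟩) = |001⟩ + |010⟩ + |100⟩. -/
import Mathlib

/-- The GHZ state `|000⟩ + |111⟩`. -/
noncomputable def ghz : Fin 2 → Fin 2 → Fin 2 → ℂ := fun a b c =>
  (if a = 0 ∧ b = 0 ∧ c = 0 then 1 else 0) + (if a = 1 ∧ b = 1 ∧ c = 1 then 1 else 0)

/-- The W state `|001⟩ + |010⟩ + |100⟩`. -/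
noncomputable def wState : Fin 2 → Fin 2 → Fin 2 → ℂ := fun a b c =>
  (if a = 0 ∧ b = 0 ∧ c = 1 then 1 else 0) + (if a = 0 ∧ b = 1 ∧ c = 0 then 1 else 0)
    + (if a = 1 ∧ b = 0 ∧ c = 0 then 1 else 0)

/-- W and GHZ are not SLOCC equivalent. -/
theorem w_not_slocc_ghz :
    ¬ ∃ M₁ M₂ M₃ : Matrix (Fin 2) (Fin 2) ℂ,
      IsUnit M₁ ∧ IsUnit M₂ ∧ IsUnit M₃ ∧
      (fun a b c => ∑ a' : Fin 2, ∑ b' : Fin 2, ∑ c' : Fin 2,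
          M₁ a a' * M₂ b b' * M₃ c c' * ghz a' b' c') = wState := by
  rintro ⟨M₁, M₂, M₃, h₁, h₂, h₃, heq⟩
  have key : ∀ a b c : Fin 2,
      M₁ a 0 * M₂ b 0 * M₃ c 0 + M₁ a 1 * M₂ b 1 * M₃ c 1 = wState a b c := by
    intro a b c
    have h := congrFun (congrFun (congrFun heq a) b) c
    simpa [ghz, Fin.sum_univ_two] using h
  have e000 := key 0 0 0
  have e001 := key 0 0 1
  have e010 := key 0 1 0
  have e011 := key 0 1 1
  have e100 := key 1 0 0
  have e101 := key 1 0 1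
  have e110 := key 1 1 0
  have e111 := key 1 1 1
  simp only [wState, show ((0:Fin 2) = 1) = False by simp, show ((1:Fin 2) = 0) = False by simp,
    and_true, true_and, and_false, false_and, if_true, if_false, and_self] at e000 e001 e010 e011 e100 e101 e110 e111
  norm_num at e000 e001 e010 e011 e100 e101 e110 e111
  have hd₁ : M₁.det ≠ 0 := by
    simpa using ((Matrix.isUnit_iff_isUnit_det M₁).mp h₁).ne_zero
  have hd₂ : M₂.det ≠ 0 := by
    simpa using ((Matrix.isUnit_iff_isUnit_det M₂).mp h₂).ne_zero
  have hd₃ : M₃.det ≠ 0 := by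
    simpa using ((Matrix.isUnit_iff_isUnit_det M₃).mp h₃).ne_zero
  rw [Matrix.det_fin_two] at hd₁ hd₂ hd₃
  have hzero : ((M₁ 0 0 * M₁ 1 1 - M₁ 0 1 * M₁ 1 0) * (M₂ 0 0 * M₂ 1 1 - M₂ 0 1 * M₂ 1 0)
      * (M₃ 0 0 * M₃ 1 1 - M₃ 0 1 * M₃ 1 0)) ^ 2 = 0 := by
    linear_combination ((M₁ 0 1)*(M₂ 1 1)*(M₃ 1 1) + (M₁ 0 0)*(M₂ 1 0)*(M₃ 1 0)) * e011 + ((M₁ 0 1)^2*(M₂ 1 1)^2*(M₃ 1 1)^2 + (M₁ 0 1)^2*(M₁ 1 1)*(M₂ 0 1)*(M₂ 1 1)^2*(M₃ 0 1)*(M₃ 1 1)^2 + (M₁ 0 1)^2*(M₁ 1 0)*(M₂ 0 0)*(M₂ 1 1)^2*(M₃ 0 0)*(M₃ 1 1)^2 + 2*(M₁ 0 0)*(M₁ 0 1)*(M₂ 1 0)*(M₂ 1 1)*(M₃ 1 0)*(M₃ 1 1) + 2*(M₁ 0 0)*(M₁ 0 1)*(M₁ 1 1)*(M₂ 0 1)*(M₂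 1 0)*(M₂ 1 1)*(M₃ 0 1)*(M₃ 1 0)*(M₃ 1 1) + 2*(M₁ 0 0)*(M₁ 0 1)*(M₁ 1 0)*(M₂ 0 0)*(M₂ 1 0)*(M₂ 1 1)*(M₃ 0 0)*(M₃ 1 0)*(M₃ 1 1) + (M₁ 0 0)^2*(M₂ 1 0)^2*(M₃ 1 0)^2 + (M₁ 0 0)^2*(M₁ 1 1)*(M₂ 0 1)*(M₂ 1 0)^2*(M₃ 0 1)*(M₃ 1 0)^2 + (M₁ 0 0)^2*(M₁ 1 0)*(M₂ 0 0)*(M₂ 1 0)^2*(M₃ 0 0)*(M₃ 1 0)^2) * e100 + (-(M₁ 0 1)^2*(M₁ 1 1)*(M₂ 0 1)*(M₂ 1 1)^2*(M₃ 0 1)^2*(M₃ 1 1) + (M₁ 0 1)^2*(M₁ 1 0)*(M₂ 0 0)*(M₂ 1 1)^2*(M₃ 0 1)^2*(M₃ 1 0) - 2*(M₁ 0 1)^2*(M₁ 1 0)*(M₂ 0 0)*(M₂ 1 1)^2*(M₃ 0 0)*(M₃ 0 1)*(M₃ 1 1) - 2*(M₁ 0 0)*(M₁ 0 1)*(M₁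 1 1)*(M₂ 0 1)*(M₂ 1 0)*(M₂ 1 1)*(M₃ 0 1)^2*(M₃ 1 0) - 2*(M₁ 0 0)*(M₁ 0 1)*(M₁ 1 0)*(M₂ 0 0)*(M₂ 1 0)*(M₂ 1 1)*(M₃ 0 0)^2*(M₃ 1 1) - 2*(M₁ 0 0)^2*(M₁ 1 1)*(M₂ 0 1)*(M₂ 1 0)^2*(M₃ 0 0)*(M₃ 0 1)*(M₃ 1 0) + (M₁ 0 0)^2*(M₁ 1 1)*(M₂ 0 1)*(M₂ 1 0)^2*(M₃ 0 0)^2*(M₃ 1 1) - (M₁ 0 0)^2*(M₁ 1 0)*(M₂ 0 0)*(M₂ 1 0)^2*(M₃ 0 0)^2*(M₃ 1 0)) * e101 + ((M₁ 0 1)^2*(M₁ 1 1)*(M₂ 0 1)^2*(M₂ 1 1)*(M₃ 0 1)*(M₃ 1 1)^2 + (M₁ 0 1)^2*(M₁ 1 0)*(M₂ 0 1)^2*(M₂ 1 0)*(M₃ 0 0)*(M₃ 1 1)^2 + 2*(M₁ 0 1)^2*(M₁ 1 0)*(M₂ 0 0)*(M₂ 0 1)*(M₂ 1 1)*(M₃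 0 1)*(M₃ 1 0)*(M₃ 1 1) - 2*(M₁ 0 1)^2*(M₁ 1 0)*(M₂ 0 0)*(M₂ 0 1)*(M₂ 1 1)*(M₃ 0 0)*(M₃ 1 1)^2 + 2*(M₁ 0 0)*(M₁ 0 1)*(M₁ 1 1)*(M₂ 0 1)^2*(M₂ 1 0)*(M₃ 0 1)*(M₃ 1 0)*(M₃ 1 1) - 2*(M₁ 0 0)*(M₁ 0 1)*(M₁ 1 1)*(M₂ 0 1)^2*(M₂ 1 0)*(M₃ 0 0)*(M₃ 1 1)^2 - 2*(M₁ 0 0)*(M₁ 0 1)*(M₁ 1 1)*(M₂ 0 0)*(M₂ 0 1)*(M₂ 1 1)*(M₃ 0 1)*(M₃ 1 0)*(M₃ 1 1) + 4*(M₁ 0 0)*(M₁ 0 1)*(M₁ 1 1)*(M₂ 0 0)*(M₂ 0 1)*(M₂ 1 1)*(M₃ 0 0)*(M₃ 1 1)^2 + 4*(M₁ 0 0)*(M₁ 0 1)*(M₁ 1 0)*(M₂ 0 0)*(M₂ 0 1)*(M₂ 1 0)*(M₃ 0 1)*(M₃ 1 0)^2 - 2*(M₁ 0 0)*(M₁ 0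 1)*(M₁ 1 0)*(M₂ 0 0)*(M₂ 0 1)*(M₂ 1 0)*(M₃ 0 0)*(M₃ 1 0)*(M₃ 1 1) - 2*(M₁ 0 0)*(M₁ 0 1)*(M₁ 1 0)*(M₂ 0 0)^2*(M₂ 1 1)*(M₃ 0 1)*(M₃ 1 0)^2 + 2*(M₁ 0 0)*(M₁ 0 1)*(M₁ 1 0)*(M₂ 0 0)^2*(M₂ 1 1)*(M₃ 0 0)*(M₃ 1 0)*(M₃ 1 1) - 2*(M₁ 0 0)^2*(M₁ 1 1)*(M₂ 0 0)*(M₂ 0 1)*(M₂ 1 0)*(M₃ 0 1)*(M₃ 1 0)^2 + 2*(M₁ 0 0)^2*(M₁ 1 1)*(M₂ 0 0)*(M₂ 0 1)*(M₂ 1 0)*(M₃ 0 0)*(M₃ 1 0)*(M₃ 1 1) + (M₁ 0 0)^2*(M₁ 1 1)*(M₂ 0 0)^2*(M₂ 1 1)*(M₃ 0 1)*(M₃ 1 0)^2 + (M₁ 0 0)^2*(M₁ 1 0)*(M₂ 0 0)^2*(M₂ 1 0)*(M₃ 0 0)*(M₃ 1 0)^2) * e110 + (-(M₁ 0 1)^2*(M₁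 1 1)*(M₂ 0 1)^2*(M₂ 1 1)*(M₃ 0 1)^2*(M₃ 1 1) + (M₁ 0 1)^2*(M₁ 1 0)*(M₂ 0 1)^2*(M₂ 1 0)*(M₃ 0 1)^2*(M₃ 1 0) - 2*(M₁ 0 1)^2*(M₁ 1 0)*(M₂ 0 1)^2*(M₂ 1 0)*(M₃ 0 0)*(M₃ 0 1)*(M₃ 1 1) - 2*(M₁ 0 1)^2*(M₁ 1 0)*(M₂ 0 0)*(M₂ 0 1)*(M₂ 1 1)*(M₃ 0 1)^2*(M₃ 1 0) + 2*(M₁ 0 1)^2*(M₁ 1 0)*(M₂ 0 0)*(M₂ 0 1)*(M₂ 1 1)*(M₃ 0 0)*(M₃ 0 1)*(M₃ 1 1) - 2*(M₁ 0 0)*(M₁ 0 1)*(M₁ 1 1)*(M₂ 0 1)^2*(M₂ 1 0)*(M₃ 0 1)^2*(M₃ 1 0) + 2*(M₁ 0 0)*(M₁ 0 1)*(M₁ 1 1)*(M₂ 0 1)^2*(M₂ 1 0)*(M₃ 0 0)*(M₃ 0 1)*(M₃ 1 1) + 2*(M₁ 0 0)*(M₁ 0 1)*(M₁ 1 1)*(M₂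 0 0)*(M₂ 0 1)*(M₂ 1 1)*(M₃ 0 1)^2*(M₃ 1 0) - 4*(M₁ 0 0)*(M₁ 0 1)*(M₁ 1 1)*(M₂ 0 0)*(M₂ 0 1)*(M₂ 1 1)*(M₃ 0 0)*(M₃ 0 1)*(M₃ 1 1) - 4*(M₁ 0 0)*(M₁ 0 1)*(M₁ 1 0)*(M₂ 0 0)*(M₂ 0 1)*(M₂ 1 0)*(M₃ 0 0)*(M₃ 0 1)*(M₃ 1 0) + 2*(M₁ 0 0)*(M₁ 0 1)*(M₁ 1 0)*(M₂ 0 0)*(M₂ 0 1)*(M₂ 1 0)*(M₃ 0 0)^2*(M₃ 1 1) + 2*(M₁ 0 0)*(M₁ 0 1)*(M₁ 1 0)*(M₂ 0 0)^2*(M₂ 1 1)*(M₃ 0 0)*(M₃ 0 1)*(M₃ 1 0) - 2*(M₁ 0 0)*(M₁ 0 1)*(M₁ 1 0)*(M₂ 0 0)^2*(M₂ 1 1)*(M₃ 0 0)^2*(M₃ 1 1) + 2*(M₁ 0 0)^2*(M₁ 1 1)*(M₂ 0 0)*(M₂ 0 1)*(M₂ 1 0)*(M₃ 0 0)*(M₃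 0 1)*(M₃ 1 0) - 2*(M₁ 0 0)^2*(M₁ 1 1)*(M₂ 0 0)*(M₂ 0 1)*(M₂ 1 0)*(M₃ 0 0)^2*(M₃ 1 1) - 2*(M₁ 0 0)^2*(M₁ 1 1)*(M₂ 0 0)^2*(M₂ 1 1)*(M₃ 0 0)*(M₃ 0 1)*(M₃ 1 0) + (M₁ 0 0)^2*(M₁ 1 1)*(M₂ 0 0)^2*(M₂ 1 1)*(M₃ 0 0)^2*(M₃ 1 1) - (M₁ 0 0)^2*(M₁ 1 0)*(M₂ 0 0)^2*(M₂ 1 0)*(M₃ 0 0)^2*(M₃ 1 0)) * e111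
  exact pow_ne_zero 2 (mul_ne_zero (mul_ne_zero hd₁ hd₂) hd₃) hzero
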